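/- Let 0 ≤ a ≤ b ≤ π. For every t ∈ [b − a, min(a + b, 2π − a − b)] there exists a spherical triangle in the unit 2-sphere with side lengths a, b, t; such a triangle is unique up to isometry of S²; and it is contained in a great circle if and only if t is an endpoint of the interval [b − a, min(a + b, 2π − a − b)]. -/

import Mathlib

/-!
Place `C` at the north pole and `B` on the meridian at colatitude `a`; moving `A` along the
parallel at colatitude `b` from longitude `0` to `π` makes `⟪A, B⟫` sweep continuously from
`cos (b - a)` to `cos (a + b)`, so some position realises `cos t`. Any two triples of unit vectors
with the same pairwise inner products have the same Gram matrix and are therefore related by a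
linear isometry. The triple lies on a great circle iff it is linearly dependent, i.e. iff its
Gram determinant vanishes, and for side lengths `a, b, t` this determinant factors as
`(cos (b - a) - cos t) * (cos t - cos (a + b))`.
-/

open Real Set

/-- Geodesic distance on the unit sphere of `ℝ³`. -/
noncomputable def sphereDist3 (x y : EuclideanSpace ℝ (Fin 3)) : ℝ :=
  Real.arccos (inner ℝ x y)

section GramMatrix

variable {𝕜 E ι : Type*} [RCLike 𝕜] [NormedAddCommGroup E] [InnerProductSpace 𝕜 E]
  [FiniteDimensional 𝕜 E] [Fintype ι]

theorem exists_linearIsometryEquiv_of_gram_eq {v w : ι → E}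
    (h : Matrix.gram 𝕜 v = Matrix.gram 𝕜 w) :
    ∃ f : E ≃ₗᵢ[𝕜] E, ∀ i, f (v i) = w i := by
  classical
  have hvw (i j : ι) : inner 𝕜 (v i) (v j) = inner 𝕜 (w i) (w j) := Matrix.ext_iff.mpr h i j
  set φ := Fintype.linearCombination 𝕜 v
  set ψ := Fintype.linearCombination 𝕜 w
  have hinner (c d : ι → 𝕜) : inner 𝕜 (φ c) (φ d) = inner 𝕜 (ψ c) (ψ d) := by
    simp only [φ, ψ, Fintype.linearCombination_apply, sum_inner, inner_sum, inner_smul_left,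
      inner_smul_right, hvw]
  have hnorm (c : ι → 𝕜) : ‖φ c‖ = ‖ψ c‖ := by
    rw [@norm_eq_sqrt_re_inner 𝕜, @norm_eq_sqrt_re_inner 𝕜, hinner]
  have hker : LinearMap.ker φ ≤ LinearMap.ker ψ := fun c hc => by
    rw [LinearMap.mem_ker, ← norm_eq_zero, ← hnorm, norm_eq_zero]
    exact hc
  -- the isometry `φ c ↦ ψ c` on the span of `v`, to be extended to all of `E`
  let L : LinearMap.range φ →ₗ[𝕜] E :=
    (LinearMap.ker φ).liftQ ψ hker ∘ₗ φ.quotKerEquivRange.symm.toLinearMap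
  have hL (c : ι → 𝕜) : L ⟨φ c, LinearMap.mem_range_self φ c⟩ = ψ c := by
    simp [L]
  let ℓ : LinearMap.range φ →ₗᵢ[𝕜] E :=
    { toLinearMap := L
      norm_map' := by
        rintro ⟨_, c, rfl⟩
        rw [hL, ← hnorm]
        rfl }
  refine ⟨ℓ.extend.toLinearIsometryEquiv rfl, fun i => ?_⟩
  have hv : φ (Pi.single i 1) = v i := by simp [φ, Fintype.linearCombination_apply_single]
  have hw : ψ (Pi.single i 1) = w i := by simp [ψ, Fintype.linearCombination_apply_single]
  rw [LinearIsometry.toLinearIsometryEquiv_apply, ← hv, ← hw, ← hL]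
  exact ℓ.extend_apply ⟨φ _, LinearMap.mem_range_self φ _⟩

theorem exists_ne_zero_forall_inner_eq_zero_iff_det_gram_eq_zero [DecidableEq ι] {u : ι → E}
    (hcard : Fintype.card ι = Module.finrank 𝕜 E) :
    (∃ v ≠ 0, ∀ i, inner 𝕜 v (u i) = 0) ↔ (Matrix.gram 𝕜 u).det = 0 := by
  have hmem (v : E) : v ∈ (Submodule.span 𝕜 (range u))ᗮ ↔ ∀ i, inner 𝕜 v (u i) = 0 := by
    rw [← Submodule.span_singleton_le_iff_mem, ← Submodule.isOrtho_iff_le,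
      Submodule.isOrtho_span]
    simp
  have hspan : Submodule.span 𝕜 (range u) = ⊤ ↔ LinearIndependent 𝕜 u :=
    ⟨fun h => linearIndependent_of_top_le_span_of_card_eq_finrank h.ge hcard,
      fun h => h.span_eq_top_of_card_eq_finrank' hcard⟩
  have hperp : (∃ v ≠ 0, ∀ i, inner 𝕜 v (u i) = 0) ↔ (Submodule.span 𝕜 (range u))ᗮ ≠ ⊥ := by
    simp only [Submodule.ne_bot_iff, hmem, and_comm]
  rw [hperp, Ne, Submodule.orthogonal_eq_bot_iff, hspan,
    ← Matrix.det_gram_ne_zero_iff_linearIndependent, not_not]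

end GramMatrix

theorem det_cos_matrix (a b t : ℝ) :
    Matrix.det !![1, cos t, cos b; cos t, 1, cos a; cos b, cos a, 1] =
      (cos (b - a) - cos t) * (cos t - cos (a + b)) := by
  rw [Matrix.det_fin_three]
  simp only [Matrix.of_apply, Matrix.cons_val', Matrix.cons_val_zero, Matrix.cons_val_fin_one,
    Matrix.cons_val_one, Matrix.cons_val, mul_one, one_mul]
  rw [cos_sub, cos_add]
  linear_combination (cos b ^ 2 - 1) * sin_sq_add_cos_sq a - sin a ^ 2 * sin_sq_add_cos_sq b

theorem min_add_two_pi_sub_le_pi (a b : ℝ) : min (a + b) (2 * π - a - b) ≤ π :=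
  min_le_iff.2 <| (le_or_gt (a + b) π).imp id fun h => by linarith

theorem cos_min_add_two_pi_sub (a b : ℝ) : cos (min (a + b) (2 * π - a - b)) = cos (a + b) := by
  rcases min_choice (a + b) (2 * π - a - b) with h | h <;> rw [h]
  rw [show 2 * π - a - b = 2 * π - (a + b) by ring, cos_two_pi_sub]

section ThirdSide

variable {a b t : ℝ} (hab : a ≤ b) (ht : t ∈ Icc (b - a) (min (a + b) (2 * π - a - b)))
include hab ht

theorem mem_Icc_zero_pi_of_mem_Icc_sub_min : t ∈ Icc 0 π :=
  ⟨by linarith [ht.1], ht.2.trans (min_add_two_pi_sub_le_pi a b)⟩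

theorem cos_mem_Icc_cos_add_cos_sub : cos t ∈ Icc (cos (a + b)) (cos (b - a)) := by
  have htπ := mem_Icc_zero_pi_of_mem_Icc_sub_min hab ht
  refine ⟨?_, cos_le_cos_of_nonneg_of_le_pi (by linarith) htπ.2 ht.1⟩
  rw [← cos_min_add_two_pi_sub]
  exact cos_le_cos_of_nonneg_of_le_pi htπ.1 (min_add_two_pi_sub_le_pi a b) ht.2

theorem cos_sub_sub_mul_sub_cos_add_eq_zero_iff :
    (cos (b - a) - cos t) * (cos t - cos (a + b)) = 0 ↔
      t = b - a ∨ t = min (a + b) (2 * π - a - b) := by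
  have htπ := mem_Icc_zero_pi_of_mem_Icc_sub_min hab ht
  have hba : b - a ∈ Icc 0 π := ⟨by linarith, ht.1.trans htπ.2⟩
  have hmin : min (a + b) (2 * π - a - b) ∈ Icc 0 π :=
    ⟨htπ.1.trans ht.2, min_add_two_pi_sub_le_pi a b⟩
  rw [mul_eq_zero, sub_eq_zero, sub_eq_zero, ← cos_min_add_two_pi_sub, injOn_cos.eq_iff hba htπ,
    injOn_cos.eq_iff htπ hmin, eq_comm (a := b - a)]

end ThirdSide

local notation "ℝ³" => EuclideanSpace ℝ (Fin 3)

theorem inner_eq_cos_sphereDist3 {x y : ℝ³} (hx : ‖x‖ = 1) (hy : ‖y‖ = 1) :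
    inner ℝ x y = cos (sphereDist3 x y) := by
  have h := abs_real_inner_le_norm x y
  rw [hx, hy, one_mul, abs_le] at h
  rw [sphereDist3, cos_arccos h.1 h.2]

theorem gram_eq_cos_sphereDist3 {A B C : ℝ³} (hA : ‖A‖ = 1) (hB : ‖B‖ = 1) (hC : ‖C‖ = 1) :
    Matrix.gram ℝ ![A, B, C] =
      !![1, cos (sphereDist3 A B), cos (sphereDist3 A C);
        cos (sphereDist3 A B), 1, cos (sphereDist3 B C);
        cos (sphereDist3 A C), cos (sphereDist3 B C), 1] := by
  ext i j
  fin_cases i <;> fin_cases j <;>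
    simp [Matrix.gram_apply, ← inner_eq_cos_sphereDist3, real_inner_comm, *]

noncomputable def sphericalPoint (θ φ : ℝ) : ℝ³ := !₂[sin θ * cos φ, sin θ * sin φ, cos θ]

theorem inner_sphericalPoint (θ φ θ' φ' : ℝ) :
    inner ℝ (sphericalPoint θ φ) (sphericalPoint θ' φ') =
      sin θ * sin θ' * cos (φ - φ') + cos θ * cos θ' := by
  simp [sphericalPoint, PiLp.inner_apply, Fin.sum_univ_three, cos_sub]
  ring

theorem norm_sphericalPoint (θ φ : ℝ) : ‖sphericalPoint θ φ‖ = 1 := by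
  rw [norm_eq_sqrt_real_inner, inner_sphericalPoint, sub_self, cos_zero, mul_one, ← sq, ← sq,
    sin_sq_add_cos_sq, sqrt_one]

theorem sphereDist3_sphericalPoint_zero_zero {θ : ℝ} (h0 : 0 ≤ θ) (hπ : θ ≤ π) (φ : ℝ) :
    sphereDist3 (sphericalPoint θ φ) (sphericalPoint 0 0) = θ := by
  simp [sphereDist3, inner_sphericalPoint, arccos_cos h0 hπ]

theorem exists_sphericalTriangle {a b t : ℝ} (h0 : 0 ≤ a) (hab : a ≤ b) (hb : b ≤ π)
    (ht : t ∈ Icc 0 π) (hcos : cos t ∈ Icc (cos (a + b)) (cos (b - a))) :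
    ∃ A B C : ℝ³, ‖A‖ = 1 ∧ ‖B‖ = 1 ∧ ‖C‖ = 1 ∧
      sphereDist3 B C = a ∧ sphereDist3 A C = b ∧ sphereDist3 A B = t := by
  set g : ℝ → ℝ := fun φ => inner ℝ (sphericalPoint b φ) (sphericalPoint a 0)
  have hg : Continuous g := by
    simp only [g, inner_sphericalPoint]
    fun_prop
  have hgπ : g π = cos (a + b) := by
    simp only [g, inner_sphericalPoint, sub_zero, cos_pi, add_comm a, cos_add]
    ring
  have hg0 : g 0 = cos (b - a) := by
    simp only [g, inner_sphericalPoint, sub_zero, cos_zero, cos_sub]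
    ring
  obtain ⟨φ, -, hφ⟩ := intermediate_value_Icc' pi_pos.le hg.continuousOn (hgπ ▸ hg0 ▸ hcos)
  exact ⟨sphericalPoint b φ, sphericalPoint a 0, sphericalPoint 0 0, norm_sphericalPoint _ _,
    norm_sphericalPoint _ _, norm_sphericalPoint _ _,
    sphereDist3_sphericalPoint_zero_zero h0 (hab.trans hb) _,
    sphereDist3_sphericalPoint_zero_zero (h0.trans hab) hb _,
    (congrArg arccos hφ).trans (arccos_cos ht.1 ht.2)⟩

theorem exists_linearIsometryEquiv_of_sphereDist3_eq {A B C A' B' C' : ℝ³}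
    (hA : ‖A‖ = 1) (hB : ‖B‖ = 1) (hC : ‖C‖ = 1) (hA' : ‖A'‖ = 1) (hB' : ‖B'‖ = 1)
    (hC' : ‖C'‖ = 1) (hBC : sphereDist3 B C = sphereDist3 B' C')
    (hAC : sphereDist3 A C = sphereDist3 A' C') (hAB : sphereDist3 A B = sphereDist3 A' B') :
    ∃ f : ℝ³ ≃ₗᵢ[ℝ] ℝ³, f A = A' ∧ f B = B' ∧ f C = C' := by
  obtain ⟨f, hf⟩ := exists_linearIsometryEquiv_of_gram_eq (v := ![A, B, C]) (w := ![A', B', C'])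
    (by rw [gram_eq_cos_sphereDist3 hA hB hC, gram_eq_cos_sphereDist3 hA' hB' hC', hBC, hAC, hAB])
  exact ⟨f, hf 0, hf 1, hf 2⟩

theorem exists_ne_zero_inner_eq_zero_iff_cos_sphereDist3 {A B C : ℝ³}
    (hA : ‖A‖ = 1) (hB : ‖B‖ = 1) (hC : ‖C‖ = 1) :
    (∃ v : ℝ³, v ≠ 0 ∧ inner ℝ v A = 0 ∧ inner ℝ v B = 0 ∧ inner ℝ v C = 0) ↔
      (cos (sphereDist3 A C - sphereDist3 B C) - cos (sphereDist3 A B)) *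
        (cos (sphereDist3 A B) - cos (sphereDist3 B C + sphereDist3 A C)) = 0 := by
  rw [← det_cos_matrix, ← gram_eq_cos_sphereDist3 hA hB hC,
    ← exists_ne_zero_forall_inner_eq_zero_iff_det_gram_eq_zero (by simp)]
  simp [Fin.forall_fin_succ]

/-- Existence and uniqueness of spherical triangles: for `0 ≤ a ≤ b ≤ π` and every
`t ∈ [b−a, min (a+b) (2π−a−b)]` there is a spherical triangle in `S²` with side lengths
`a, b, t`; it is unique up to isometry of `S²`; and it lies on a great circle iff `t` is an
endpoint of the interval. -/
theorem spherical_triangle_existence_uniqueness (a b : ℝ)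
    (h0 : 0 ≤ a) (hab : a ≤ b) (hb : b ≤ π) :
    (∀ t ∈ Set.Icc (b - a) (min (a + b) (2 * π - a - b)),
      ∃ A B C : EuclideanSpace ℝ (Fin 3), ‖A‖ = 1 ∧ ‖B‖ = 1 ∧ ‖C‖ = 1 ∧
        sphereDist3 B C = a ∧ sphereDist3 A C = b ∧ sphereDist3 A B = t) ∧
    (∀ t ∈ Set.Icc (b - a) (min (a + b) (2 * π - a - b)),
      ∀ A B C A' B' C' : EuclideanSpace ℝ (Fin 3),
        ‖A‖ = 1 → ‖B‖ = 1 → ‖C‖ = 1 → ‖A'‖ = 1 → ‖B'‖ = 1 → ‖C'‖ = 1 →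
        sphereDist3 B C = a → sphereDist3 A C = b → sphereDist3 A B = t →
        sphereDist3 B' C' = a → sphereDist3 A' C' = b → sphereDist3 A' B' = t →
        ∃ f : EuclideanSpace ℝ (Fin 3) ≃ₗᵢ[ℝ] EuclideanSpace ℝ (Fin 3),
          f A = A' ∧ f B = B' ∧ f C = C') ∧
    (∀ t ∈ Set.Icc (b - a) (min (a + b) (2 * π - a - b)),
      ∀ A B C : EuclideanSpace ℝ (Fin 3),
        ‖A‖ = 1 → ‖B‖ = 1 → ‖C‖ = 1 →
        sphereDist3 B C = a → sphereDist3 A C = b → sphereDist3 A B = t →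
        ((∃ v : EuclideanSpace ℝ (Fin 3), v ≠ 0 ∧
            (inner ℝ v A : ℝ) = 0 ∧ (inner ℝ v B : ℝ) = 0 ∧ (inner ℝ v C : ℝ) = 0) ↔
          (t = b - a ∨ t = min (a + b) (2 * π - a - b)))) := by
  refine ⟨fun t ht => ?_, ?_, fun t ht A B C hA hB hC hBC hAC hAB => ?_⟩
  · exact exists_sphericalTriangle h0 hab hb (mem_Icc_zero_pi_of_mem_Icc_sub_min hab ht)
      (cos_mem_Icc_cos_add_cos_sub hab ht)
  · intro t _ A B C A' B' C' hA hB hC hA' hB' hC' hBC hAC hAB hBC' hAC' hAB'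
    exact exists_linearIsometryEquiv_of_sphereDist3_eq hA hB hC hA' hB' hC'
      (hBC.trans hBC'.symm) (hAC.trans hAC'.symm) (hAB.trans hAB'.symm)
  · rw [exists_ne_zero_inner_eq_zero_iff_cos_sphereDist3 hA hB hC, hBC, hAC, hAB]
    exact cos_sub_sub_mul_sub_cos_add_eq_zero_iff hab ht
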